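/- Let G be a weighted graph with normalized Laplacian 𝓛_G = D^{-1/2} L_G D^{-1/2}, where D is the diagonal degree matrix with positive diagonal. For any k-way partition A_1, …, A_k of the vertex set into nonempty sets, max_{1≤i≤k} φ_G(A_i) ≥ λ_k(𝓛_G)/2, where λ_k is the k-th smallest eigenvalue of 𝓛_G. Consequently the k-way expansion constant ρ(k) = min over k-way partitions of max_i φ(A_i) satisfies ρ(k) ≥ λ_k(𝓛_G)/2. -/

import Mathlib

open Matrix BigOperators

noncomputable def deg {n : ℕ} (w : Fin n → Fin n → ℝ) (v : Fin n) : ℝ := ∑ u, w v u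

noncomputable def lapl {n : ℕ} (w : Fin n → Fin n → ℝ) : Matrix (Fin n) (Fin n) ℝ :=
  Matrix.diagonal (deg w) - Matrix.of w

noncomputable def normLapl {n : ℕ} (w : Fin n → Fin n → ℝ) : Matrix (Fin n) (Fin n) ℝ :=
  Matrix.diagonal (fun v => (deg w v) ^ (-(1:ℝ)/2)) * lapl w *
    Matrix.diagonal (fun v => (deg w v) ^ (-(1:ℝ)/2))

noncomputable def conductance {n : ℕ} (w : Fin n → Fin n → ℝ) (S : Finset (Fin n)) : ℝ :=
  (∑ u ∈ S, ∑ v ∈ Sᶜ, w u v) / ∑ u ∈ S, deg w u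

/-!
Represent the partition by its part map `p : V → Fin k` and consider the test vectors
`x = D^{1/2} (c ∘ p)` for `c : Fin k → ℝ`. The conditions `⟨b_j, x⟩ = 0` for the fewer than `k`
eigenvectors `b_j` with eigenvalue below `λ_k` have a common solution `c ≠ 0`, and for it
`λ_k ‖x‖² ≤ xᵀ 𝓛 x`. Here `‖x‖² = ∑ᵢ cᵢ² μ(Aᵢ)`, while
`xᵀ 𝓛 x = ½ ∑_{u,v} w(u,v) (c_{p u} - c_{p v})² ≤ 2 ∑ᵢ cᵢ² w(Aᵢ, V ∖ Aᵢ)`, because only edges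
between different parts contribute and `(a - b)² ≤ 2a² + 2b²`. Comparing the two `cᵢ²`-weighted
sums yields a part with `λ_k μ(Aᵢ) / 2 ≤ w(Aᵢ, V ∖ Aᵢ)`.
-/

open Finset

theorem Tuple.card_filter_lt_sort_le {n : ℕ} {α : Type*} [LinearOrder α] (f : Fin n → α)
    (m : Fin n) : #{j | f j < f (Tuple.sort f m)} ≤ m := by
  rw [← Fin.card_Iio m]
  refine card_le_card_of_injOn (Tuple.sort f).symm (fun j hj => ?_)
    (Tuple.sort f).symm.injective.injOn
  rw [mem_coe, mem_filter] at hj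
  rw [mem_coe, mem_Iio]
  by_contra! hm
  have := Tuple.monotone_sort f hm
  simp only [Function.comp_apply, Equiv.apply_symm_apply] at this
  exact hj.2.not_ge this

theorem exists_le_of_sum_mul_le_sum_mul {ι : Type*} [Fintype ι] {s a b : ι → ℝ}
    (hs : ∀ i, 0 ≤ s i) (hs₀ : ∃ i, 0 < s i) (h : ∑ i, s i * a i ≤ ∑ i, s i * b i) :
    ∃ i, a i ≤ b i := by
  by_contra! hlt
  obtain ⟨i₀, hi₀⟩ := hs₀
  refine h.not_gt (sum_lt_sum (fun i _ => ?_) ⟨i₀, mem_univ _, ?_⟩)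
  · exact mul_le_mul_of_nonneg_left (hlt i).le (hs i)
  · exact mul_lt_mul_of_pos_left (hlt i₀) hi₀

theorem eq_filter_of_mem_of_disjoint {ι α : Type*} [Fintype α] [DecidableEq ι]
    {A : ι → Finset α} (hdisj : ∀ i j, i ≠ j → Disjoint (A i) (A j)) {p : α → ι}
    (hp : ∀ v, v ∈ A (p v)) (i : ι) : A i = ({v | p v = i} : Finset α) := by
  ext v
  rw [mem_filter, and_iff_right (mem_univ v)]
  refine ⟨fun hv => ?_, fun h => h ▸ hp v⟩
  by_contra h
  exact disjoint_left.1 (hdisj _ _ h) (hp v) hv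

theorem Matrix.diagonal_sqrt_mulVec_dotProduct_self {n : Type*} [Fintype n] [DecidableEq n]
    {d : n → ℝ} (hd : ∀ i, 0 ≤ d i) (y : n → ℝ) :
    (diagonal (fun i => √(d i)) *ᵥ y) ⬝ᵥ (diagonal (fun i => √(d i)) *ᵥ y) =
      ∑ i, d i * y i ^ 2 := by
  refine sum_congr rfl fun i _ => ?_
  simp only [mulVec_diagonal]
  rw [mul_mul_mul_comm, Real.mul_self_sqrt (hd i), sq]

theorem OrthonormalBasis.mul_inner_self_le_inner_map_self {ι E : Type*} [Fintype ι]
    [NormedAddCommGroup E] [InnerProductSpace ℝ E] (b : OrthonormalBasis ι ℝ E)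
    {T : E →ₗ[ℝ] E} {μ : ι → ℝ} (hT : ∀ j, T (b j) = μ j • b j) {t : ℝ} {x : E}
    (hx : ∀ j, μ j < t → inner ℝ (b j) x = 0) :
    t * inner ℝ x x ≤ inner ℝ x (T x) := by
  have hTx : ∀ j, inner ℝ (b j) (T x) = μ j * inner ℝ (b j) x := by
    intro j
    conv_lhs => rw [← b.sum_repr' x]
    simp only [map_sum, map_smul, hT, smul_smul, b.orthonormal.inner_right_fintype]
    ring
  calc t * inner ℝ x x = ∑ j, t * (inner ℝ (b j) x * inner ℝ (b j) x) := by
        simp only [← b.sum_inner_mul_inner x x, mul_sum, real_inner_comm x]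
    _ ≤ ∑ j, μ j * (inner ℝ (b j) x * inner ℝ (b j) x) := by
        refine sum_le_sum fun j _ => ?_
        rcases lt_or_ge (μ j) t with hj | hj
        · simp [hx j hj]
        · exact mul_le_mul_of_nonneg_right hj (mul_self_nonneg _)
    _ = inner ℝ x (T x) := by
        simp only [← b.sum_inner_mul_inner x (T x), hTx, real_inner_comm x]
        exact sum_congr rfl fun j _ => by ring

theorem Matrix.IsHermitian.mul_dotProduct_self_le {n : Type*} [Fintype n] [DecidableEq n]
    {M : Matrix n n ℝ} (hM : M.IsHermitian) {t : ℝ} {x : n → ℝ}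
    (hx : ∀ j, hM.eigenvalues j < t → ⇑(hM.eigenvectorBasis j) ⬝ᵥ x = 0) :
    t * (x ⬝ᵥ x) ≤ x ⬝ᵥ M *ᵥ x := by
  have := hM.eigenvectorBasis.mul_inner_self_le_inner_map_self (T := Matrix.toLpLin 2 2 M)
    (μ := hM.eigenvalues) (x := WithLp.toLp 2 x) (t := t) ?_ ?_
  · simpa only [EuclideanSpace.inner_toLp_toLp, star_trivial, dotProduct_comm x, toLpLin_apply]
      using this
  · intro j
    ext1
    simp [hM.mulVec_eigenvectorBasis]
  · intro j hj
    simpa [EuclideanSpace.inner_eq_star_dotProduct, dotProduct_comm] using hx j hj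

-- The easy half of the Courant–Fischer min-max theorem.
theorem Matrix.IsHermitian.exists_ne_zero_eigenvalues_sort_mul_le {n : ℕ}
    {M : Matrix (Fin n) (Fin n) ℝ} (hM : M.IsHermitian) {V : Type*} [AddCommGroup V]
    [Module ℝ V] [FiniteDimensional ℝ V] (Φ : V →ₗ[ℝ] Fin n → ℝ) (m : Fin n)
    (hm : (m : ℕ) < Module.finrank ℝ V) :
    ∃ v ≠ 0, hM.eigenvalues (Tuple.sort hM.eigenvalues m) * (Φ v ⬝ᵥ Φ v) ≤ Φ v ⬝ᵥ M *ᵥ Φ v := by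
  set t := hM.eigenvalues (Tuple.sort hM.eigenvalues m)
  let T : Finset (Fin n) := {j | hM.eigenvalues j < t}
  let Ψ : V →ₗ[ℝ] T → ℝ := (of fun (j : T) u => hM.eigenvectorBasis j u).mulVecLin ∘ₗ Φ
  have hrank : Module.finrank ℝ (T → ℝ) < Module.finrank ℝ V := by
    rw [Module.finrank_fintype_fun_eq_card, Fintype.card_coe]
    exact (Tuple.card_filter_lt_sort_le _ m).trans_lt hm
  obtain ⟨v, hv, hv0⟩ :=
    Submodule.exists_mem_ne_zero_of_ne_bot (Ψ.ker_ne_bot_of_finrank_lt hrank)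
  refine ⟨v, hv0, hM.mul_dotProduct_self_le fun j hj => ?_⟩
  exact congrFun (LinearMap.mem_ker.1 hv) ⟨j, by simpa [T] using hj⟩

section Graph

variable {n : ℕ} {w : Fin n → Fin n → ℝ}

-- `w(S, V ∖ S)` and `μ(S)`; `conductance w S` unfolds to `cut w S / vol w S`.
noncomputable def cut (w : Fin n → Fin n → ℝ) (S : Finset (Fin n)) : ℝ :=
  ∑ u ∈ S, ∑ v ∈ Sᶜ, w u v

noncomputable def vol (w : Fin n → Fin n → ℝ) (S : Finset (Fin n)) : ℝ := ∑ u ∈ S, deg w u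

theorem vol_pos (hdeg : ∀ v, 0 < deg w v) {S : Finset (Fin n)} (hS : S.Nonempty) :
    0 < vol w S :=
  sum_pos (fun v _ => hdeg v) hS

theorem dotProduct_lapl_mulVec (hsym : ∀ u v, w u v = w v u) (y : Fin n → ℝ) :
    y ⬝ᵥ lapl w *ᵥ y = (∑ u, ∑ v, w u v * (y u - y v) ^ 2) / 2 := by
  have hL : y ⬝ᵥ lapl w *ᵥ y = ∑ u, ∑ v, w u v * (y u ^ 2 - y u * y v) := by
    rw [lapl, sub_mulVec, dotProduct_sub]
    simp only [dotProduct, mulVec_diagonal]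
    simp only [mulVec, dotProduct, of_apply, deg, mul_sum, sum_mul, ← sum_sub_distrib]
    exact sum_congr rfl fun u _ => sum_congr rfl fun v _ => by ring
  have hswap : ∑ u, ∑ v, w u v * (y v ^ 2 - y u * y v) =
      ∑ u, ∑ v, w u v * (y u ^ 2 - y u * y v) := by
    rw [sum_comm]
    exact sum_congr rfl fun u _ => sum_congr rfl fun v _ => by rw [hsym]; ring
  rw [hL, eq_div_iff two_ne_zero, mul_two]
  nth_rewrite 2 [← hswap]
  simp only [← sum_add_distrib]
  exact sum_congr rfl fun u _ => sum_congr rfl fun v _ => by ring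

theorem dotProduct_normLapl_mulVec (hdeg : ∀ v, 0 < deg w v) (y : Fin n → ℝ) :
    (diagonal (fun v => √(deg w v)) *ᵥ y) ⬝ᵥ
        normLapl w *ᵥ (diagonal (fun v => √(deg w v)) *ᵥ y) =
      y ⬝ᵥ lapl w *ᵥ y := by
  have hD : diagonal (fun v => deg w v ^ (-(1:ℝ)/2)) * diagonal (fun v => √(deg w v)) = 1 := by
    rw [diagonal_mul_diagonal, ← diagonal_one]
    congr 1
    funext v
    rw [Real.sqrt_eq_rpow, ← Real.rpow_add (hdeg v)]
    norm_num
  rw [normLapl, mulVec_mulVec, Matrix.mul_assoc, hD, Matrix.mul_one, ← mulVec_mulVec,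
    dotProduct_mulVec, ← mulVec_transpose, diagonal_transpose, mulVec_mulVec, hD, one_mulVec]

end Graph

section Partition

variable {n k : ℕ} {w : Fin n → Fin n → ℝ} (p : Fin n → Fin k) (c : Fin k → ℝ)

theorem sum_deg_mul_sq_eq_sum_vol :
    ∑ u, deg w u * c (p u) ^ 2 = ∑ i, c i ^ 2 * vol w {u | p u = i} := by
  rw [← sum_fiberwise univ p]
  refine sum_congr rfl fun i _ => ?_
  rw [vol, mul_sum]
  refine sum_congr rfl fun u hu => ?_
  rw [(mem_filter.1 hu).2, mul_comm]

theorem sum_cross_eq_sum_cut :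
    ∑ u, ∑ v, (if p u = p v then 0 else w u v * c (p u) ^ 2) =
      ∑ i, c i ^ 2 * cut w {u | p u = i} := by
  rw [← sum_fiberwise univ p]
  refine sum_congr rfl fun i _ => ?_
  rw [cut, mul_sum]
  refine sum_congr rfl fun u hu => ?_
  rw [(mem_filter.1 hu).2, mul_sum, compl_filter, sum_filter]
  exact sum_congr rfl fun v _ => by by_cases h : p v = i <;> simp [h, eq_comm (a := i), mul_comm]

theorem sum_mul_sub_sq_le_four_mul_sum_cut (hsym : ∀ u v, w u v = w v u)
    (hnonneg : ∀ u v, 0 ≤ w u v) :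
    ∑ u, ∑ v, w u v * (c (p u) - c (p v)) ^ 2 ≤ 4 * ∑ i, c i ^ 2 * cut w {u | p u = i} := by
  have hswap : ∑ u, ∑ v, (if p u = p v then 0 else w u v * c (p v) ^ 2) =
      ∑ u, ∑ v, (if p u = p v then 0 else w u v * c (p u) ^ 2) := by
    rw [sum_comm]
    exact sum_congr rfl fun u _ => sum_congr rfl fun v _ => by
      rw [hsym]
      exact if_congr eq_comm rfl rfl
  calc ∑ u, ∑ v, w u v * (c (p u) - c (p v)) ^ 2
      ≤ ∑ u, ∑ v, 2 * ((if p u = p v then 0 else w u v * c (p u) ^ 2) +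
          (if p u = p v then 0 else w u v * c (p v) ^ 2)) := by
        refine sum_le_sum fun u _ => sum_le_sum fun v _ => ?_
        split_ifs with h
        · simp [h]
        · nlinarith [mul_nonneg (hnonneg u v) (sq_nonneg (c (p u) + c (p v)))]
    _ = 4 * ∑ i, c i ^ 2 * cut w {u | p u = i} := by
        simp only [← mul_sum, sum_add_distrib, hswap, sum_cross_eq_sum_cut]
        ring

end Partition

/-- easy direction of the higher-order Cheeger inequality: any k-way
partition has a part of conductance at least λ_k(𝓛)/2; hence ρ(k) ≥ λ_k(𝓛)/2. -/
theorem stmt9 {n k : ℕ} (hk : 1 ≤ k) (hkn : k ≤ n)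
    (w : Fin n → Fin n → ℝ)
    (hsym : ∀ u v, w u v = w v u) (hnonneg : ∀ u v, 0 ≤ w u v)
    (hdeg : ∀ v, 0 < deg w v)
    (hH : (normLapl w).IsHermitian)
    (A : Fin k → Finset (Fin n))
    (hne : ∀ i, (A i).Nonempty)
    (hdisj : ∀ i j, i ≠ j → Disjoint (A i) (A j))
    (hcover : ∀ v, ∃ i, v ∈ A i) :
    ∃ i, hH.eigenvalues (Tuple.sort hH.eigenvalues ⟨k - 1, by omega⟩) / 2 ≤
      conductance w (A i) := by
  choose p hp using hcover
  have hA := eq_filter_of_mem_of_disjoint hdisj hp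
  set lam := hH.eigenvalues (Tuple.sort hH.eigenvalues ⟨k - 1, by omega⟩)
  obtain ⟨c, hc0, hc⟩ := hH.exists_ne_zero_eigenvalues_sort_mul_le
    ((diagonal fun v => √(deg w v)).mulVecLin ∘ₗ LinearMap.funLeft ℝ ℝ p) ⟨k - 1, by omega⟩
    (by rw [Module.finrank_fin_fun, Fin.val_mk]; omega)
  rw [LinearMap.comp_apply, mulVecLin_apply, dotProduct_normLapl_mulVec hdeg,
    dotProduct_lapl_mulVec hsym, diagonal_sqrt_mulVec_dotProduct_self fun v => (hdeg v).le] at hc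
  simp only [LinearMap.funLeft_apply, sum_deg_mul_sq_eq_sum_vol] at hc
  have key : ∑ i, c i ^ 2 * (lam / 2 * vol w (A i)) ≤ ∑ i, c i ^ 2 * cut w (A i) := by
    have hcut := sum_mul_sub_sq_le_four_mul_sum_cut p c hsym hnonneg
    simp only [hA, mul_left_comm _ (lam / 2), ← mul_sum]
    linarith
  obtain ⟨i, hi⟩ := exists_le_of_sum_mul_le_sum_mul (fun i => sq_nonneg (c i))
    ((Function.ne_iff.1 hc0).imp fun _ => pow_two_pos_of_ne_zero) key
  exact ⟨i, (le_div_iff₀ (vol_pos hdeg (hne i))).2 hi⟩
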